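/- arXiv:0902.3839 — 2 statements merged into one kernel-verified Lean document; each statement's English description precedes it below -/
import Mathlib

section
/- Let K_{a+1} = 1 ≤ K_a < K_{a-1} < ⋯ < K_1 < K_0 = +∞ be real numbers with K_j > K_{j+1}^a for j = 1,…,a. For y = (y_1,…,y_a) ∈ ℝ_{>0}^a define ξ_j = y_j/y_{j+1} for j < a and ξ_a = y_a. Suppose y satisfies ξ_1 ≥ 1, …, ξ_{a-1} ≥ 1 (i.e., y_1 ≥ y_2 ≥ ⋯ ≥ y_a) and y_a > K_1 + 1. Then there exist an index 1 < l ≤ a+1 and a nonempty subset I = {i_1 < i_2 < ⋯ < i_r} ⊆ {1,…,a} with i_r = a such that: ξ_j ≤ K_l for all j ∉ I, and ξ_j > K_{l-1} for all j ∈ I. -/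
/-!
The values `ξ_j` cannot meet all of the `a + 1` intervals `(K_{a+1}, K_a], …, (K_2, K_1], (K_1, ∞)`:
since `ξ_a = y_a > K_1` lies in the last one, the `a - 1` values `ξ_1, …, ξ_{a-1}` miss one of the
`a` disjoint intervals `(K_{i+1}, K_i]` (pigeonhole). With `l = i + 1`, take for `I` the indices
with `ξ_j > K_i`.
-/

open Finset

section Thresholds

variable {K : ℕ → ℝ} {n p : ℕ}

lemma one_le_of_pow_le (hlast : 1 ≤ K (n + 1))
    (hpow : ∀ j, 1 ≤ j → j ≤ n → K (j + 1) ^ p ≤ K j) {j : ℕ} (hj : 1 ≤ j) (hjn : j ≤ n + 1) :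
    1 ≤ K j := by
  refine Nat.decreasingInduction' (P := fun k => 1 ≤ K k) (fun k hk hjk ih => ?_) hjn hlast
  exact (one_le_pow₀ ih).trans (hpow k (hj.trans hjk) (Nat.lt_succ_iff.1 hk))

lemma antitoneOn_of_pow_le (hp : p ≠ 0) (hlast : 1 ≤ K (n + 1))
    (hpow : ∀ j, 1 ≤ j → j ≤ n → K (j + 1) ^ p ≤ K j) : AntitoneOn K (Set.Icc 1 (n + 1)) := by
  have hstep : ∀ j, 1 ≤ j → j ≤ n → K (j + 1) ≤ K j := fun j hj hjn =>
    calc K (j + 1) ≤ K (j + 1) ^ p :=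
          le_self_pow₀ (one_le_of_pow_le hlast hpow (by omega) (by omega)) hp
      _ ≤ K j := hpow j hj hjn
  intro i hi j hj hij
  induction j, hij using Nat.le_induction with
  | base => rfl
  | succ k hik ih =>
    have hkn : k ≤ n := Nat.lt_succ_iff.1 hj.2
    exact (hstep k (hi.1.trans hik) hkn).trans (ih ⟨hi.1.trans hik, hkn.trans n.le_succ⟩)

end Thresholds

lemma exists_Ioc_notMem_of_card_lt {α : Type*} [LinearOrder α] {K : ℕ → α} {m : ℕ}
    (hK : AntitoneOn K (Set.Icc 1 (m + 1))) {S : Finset α} (hS : #S < m) :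
    ∃ i ∈ Icc 1 m, ∀ x ∈ S, x ∉ Set.Ioc (K (i + 1)) (K i) := by
  by_contra! hhit
  obtain ⟨x, -⟩ := hhit 1 (mem_Icc.2 ⟨le_rfl, by omega⟩)
  have : Nonempty α := ⟨x⟩
  choose! g hgS hgI using hhit
  have hcard : #S < #(Icc 1 m) := by simpa using hS
  obtain ⟨i, hi, i', hi', hne, heq⟩ := exists_ne_map_eq_of_card_lt_of_maps_to hcard hgS
  wlog hlt : i < i' generalizing i i'
  · exact this i' hi' i hi hne.symm heq.symm (by omega)
  simp only [mem_Icc] at hi hi'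
  have hK' : K i' ≤ K (i + 1) := hK ⟨by omega, by omega⟩ ⟨by omega, by omega⟩ hlt
  have h₁ := (hgI i (mem_Icc.2 hi)).1
  have h₂ := (hgI i' (mem_Icc.2 hi')).2
  rw [heq] at h₁
  exact (h₁.trans_le (h₂.trans hK')).false

theorem stmt6_general (a : ℕ) (ha : 1 ≤ a) (K : ℕ → ℝ) (y : ℕ → ℝ)
    (hK1 : K (a + 1) = 1)
    (hK2 : ∀ j, 1 ≤ j → j ≤ a → K (j + 1) ^ a < K j)
    (hya : K 1 + 1 < y a) :
    ∃ l : ℕ, 1 < l ∧ l ≤ a + 1 ∧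
      ∃ I : Finset ℕ, I ⊆ Finset.Icc 1 a ∧ a ∈ I ∧
        (∀ j ∈ Finset.Icc 1 a, j ∉ I →
          (if j = a then y a else y j / y (j + 1)) ≤ K l) ∧
        (∀ j ∈ I, K (l - 1) < (if j = a then y a else y j / y (j + 1))) := by
  set ξ : ℕ → ℝ := fun j => if j = a then y a else y j / y (j + 1)
  have hK : AntitoneOn K (Set.Icc 1 (a + 1)) :=
    antitoneOn_of_pow_le (by omega) hK1.ge fun j hj hja => (hK2 j hj hja).le
  have hcard : #((Icc 1 (a - 1)).image ξ) < a :=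
    card_image_le.trans_lt (by rw [Nat.card_Icc]; omega)
  obtain ⟨i, hi, hgap⟩ := exists_Ioc_notMem_of_card_lt hK hcard
  rw [mem_Icc] at hi
  have hξa : K i < ξ a :=
    calc K i ≤ K 1 := hK ⟨le_rfl, by omega⟩ ⟨hi.1, by omega⟩ hi.1
      _ < K 1 + 1 := lt_add_one _
      _ < ξ a := by simpa [ξ] using hya
  have hmiss : ∀ j ∈ Icc 1 a, ξ j ∉ Set.Ioc (K (i + 1)) (K i) := by
    intro j hj
    rcases eq_or_ne j a with rfl | hja
    · exact fun h => h.2.not_gt hξa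
    · exact hgap _ (mem_image_of_mem ξ (by simp only [mem_Icc] at hj ⊢; omega))
  refine ⟨i + 1, by omega, by omega, (Icc 1 a).filter (K i < ξ ·), filter_subset _ _,
    mem_filter.2 ⟨mem_Icc.2 ⟨ha, le_rfl⟩, hξa⟩, fun j hj hjI => ?_, fun j hj => (mem_filter.1 hj).2⟩
  have hle : ξ j ≤ K i := not_lt.1 fun h => hjI (mem_filter.2 ⟨hj, h⟩)
  exact not_lt.1 fun h => hmiss j hj ⟨h, hle⟩

/-- The combinatorial covering lemma (Section 4): given constants
`1 = K_{a+1} ≤ K_a < ⋯ < K_1` with `K_j > K_{j+1}^a`, and `y₁ ≥ ⋯ ≥ y_a > 0` with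
`y_a > K_1 + 1`, setting `ξ_j = y_j/y_{j+1}` (`j < a`) and `ξ_a = y_a`, there exist
`1 < l ≤ a+1` and a subset `I ⊆ {1,…,a}` containing `a` such that `ξ_j ≤ K_l` for
`j ∉ I` and `ξ_j > K_{l-1}` for `j ∈ I`. -/
theorem stmt6 (a : ℕ) (ha : 1 ≤ a) (K : ℕ → ℝ) (y : ℕ → ℝ)
    (hK1 : K (a + 1) = 1)
    (hK2 : ∀ j, 1 ≤ j → j ≤ a → K (j + 1) ^ a < K j)
    (hy : ∀ j, 1 ≤ j → j ≤ a → 0 < y j)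
    (hmono : ∀ j, 1 ≤ j → j < a → y (j + 1) ≤ y j)
    (hya : K 1 + 1 < y a) :
    ∃ l : ℕ, 1 < l ∧ l ≤ a + 1 ∧
      ∃ I : Finset ℕ, I ⊆ Finset.Icc 1 a ∧ a ∈ I ∧
        (∀ j ∈ Finset.Icc 1 a, j ∉ I →
          (if j = a then y a else y j / y (j + 1)) ≤ K l) ∧
        (∀ j ∈ I, K (l - 1) < (if j = a then y a else y j / y (j + 1))) :=
  stmt6_general a ha K y hK1 hK2 hya
end

section
/- Let U = Δ* × Δ^b ⊆ ℂ^{1+b} with coordinates (s, w), and let U′ be another such chart with coordinate s′ satisfying s = ξ s′ on the overlap, where ξ is a smooth nowhere-vanishing function bounded with bounded derivative, and |s|, |s′| ≤ 1/2. Then there is a constant C such that on any compact subset of the overlap, |1/(s log|s|)| ≤ C (|1/(s′ log|s′|)| + 1); consequently a differential form Poincaré bounded with respect to (s, w) is Poincaré bounded with respect to (s′, w′). -/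
/-!
Write `|s| = t |s′|` with `c ≤ t ≤ C_b`. Then `log (1/|s|) = log (1/|s′|) - log t` is at least
`log (1/|s′|) - C_b`, and it is also at least `log 2` because `|s| ≤ 1/2`; the larger of these
two lower bounds is at least `κ log (1/|s′|)` with `κ = log 2 / (log 2 + C_b)`. Together with
`|s| ≥ c |s′|` this bounds `1/(|s| log (1/|s|))` by a constant multiple of
`1/(|s′| log (1/|s′|))`.
-/

open Real

namespace PoincareBound

lemma log_two_le_log_one_div {x : ℝ} (hx : 0 < x) (hx2 : x ≤ 1 / 2) :
    log 2 ≤ log (1 / x) :=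
  log_le_log two_pos (by rw [le_div_iff₀ hx]; linarith)

lemma div_add_mul_le_max_sub {m K L : ℝ} (hm : 0 < m) (hK : 0 ≤ K) :
    m / (m + K) * L ≤ max m (L - K) := by
  rw [div_mul_eq_mul_div, div_le_iff₀ (by linarith)]
  rcases le_total L (m + K) with hLK | hLK
  · nlinarith [le_max_left m (L - K)]
  · nlinarith [le_max_right m (L - K)]

lemma mul_log_one_div_le_log_one_div_mul {Cb t y : ℝ} (ht : 0 < t) (htC : t ≤ Cb)
    (hy : 0 < y) (hty : t * y ≤ 1 / 2) :
    log 2 / (log 2 + Cb) * log (1 / y) ≤ log (1 / (t * y)) := by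
  have hlog : log (1 / (t * y)) = log (1 / y) - log t := by
    rw [one_div, one_div, log_inv, log_inv, log_mul ht.ne' hy.ne']; ring
  have hlogt : log t ≤ Cb := (log_le_sub_one_of_pos ht).trans (by linarith)
  refine (div_add_mul_le_max_sub (log_pos one_lt_two) (by linarith)).trans (max_le ?_ ?_)
  · exact log_two_le_log_one_div (by positivity) hty
  · linarith

lemma one_div_mul_log_one_div_le {c Cb t y : ℝ} (hc : 0 < c) (hct : c ≤ t) (htC : t ≤ Cb)
    (hy : 0 < y) (hy2 : y ≤ 1 / 2) (hty : t * y ≤ 1 / 2) :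
    1 / (t * y * log (1 / (t * y))) ≤
      (log 2 + Cb) / (c * log 2) * (1 / (y * log (1 / y))) := by
  have hlog2 : 0 < log 2 := log_pos one_lt_two
  have hCb : 0 < log 2 + Cb := by linarith
  have ht : 0 < t := hc.trans_le hct
  have hLy : 0 < log (1 / y) := hlog2.trans_le (log_two_le_log_one_div hy hy2)
  have hLty : 0 < log (1 / (t * y)) :=
    hlog2.trans_le (log_two_le_log_one_div (by positivity) hty)
  have hcomp : log 2 * log (1 / y) ≤ (log 2 + Cb) * log (1 / (t * y)) := by
    have := mul_log_one_div_le_log_one_div_mul ht htC hy hty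
    rwa [div_mul_eq_mul_div, div_le_iff₀ hCb, mul_comm _ (log 2 + Cb)] at this
  rw [mul_one_div, div_div, div_le_div_iff₀ (by positivity) (by positivity), one_mul]
  calc c * log 2 * (y * log (1 / y)) = c * y * (log 2 * log (1 / y)) := by ring
    _ ≤ t * y * ((log 2 + Cb) * log (1 / (t * y))) := by gcongr
    _ = (log 2 + Cb) * (t * y * log (1 / (t * y))) := by ring

end PoincareBound

open PoincareBound in
theorem stmt14_general (c Cb : ℝ) (hc : 0 < c) :
    ∃ C : ℝ, ∀ s s' ξ : ℂ, s = ξ * s' →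
      c ≤ ‖ξ‖ → ‖ξ‖ ≤ Cb →
      0 < ‖s‖ → ‖s‖ ≤ 1 / 2 → 0 < ‖s'‖ → ‖s'‖ ≤ 1 / 2 →
      1 / (‖s‖ * Real.log (1 / ‖s‖)) ≤
        C * (1 / (‖s'‖ * Real.log (1 / ‖s'‖)) + 1) := by
  refine ⟨(log 2 + Cb) / (c * log 2), ?_⟩
  rintro s s' ξ rfl hcξ hξC - hs hs'₀ hs'
  rw [norm_mul] at hs ⊢
  have hC : 0 ≤ (log 2 + Cb) / (c * log 2) := by
    have hlog2 : 0 < log 2 := log_pos one_lt_two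
    have hCb : 0 ≤ Cb := by linarith
    positivity
  calc _ ≤ (log 2 + Cb) / (c * log 2) * (1 / (‖s'‖ * log (1 / ‖s'‖))) :=
        one_div_mul_log_one_div_le hc hcξ hξC hs'₀ hs' hs
    _ ≤ _ := mul_le_mul_of_nonneg_left (le_add_of_nonneg_right zero_le_one) hC

/-- Key scalar estimate of Lemma 4.5 (coordinate-independence of Poincaré boundedness):
if `s = ξ s′` with `0 < c ≤ |ξ| ≤ C_b`, and `0 < |s|, |s′| ≤ 1/2`, then there is a
constant `C` (depending only on `c, C_b`) with
`1/(|s| log(1/|s|)) ≤ C (1/(|s′| log(1/|s′|)) + 1)`. -/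
theorem stmt14 (c Cb : ℝ) (hc : 0 < c) (hcb : c ≤ Cb) :
    ∃ C : ℝ, ∀ s s' ξ : ℂ, s = ξ * s' →
      c ≤ ‖ξ‖ → ‖ξ‖ ≤ Cb →
      0 < ‖s‖ → ‖s‖ ≤ 1 / 2 → 0 < ‖s'‖ → ‖s'‖ ≤ 1 / 2 →
      1 / (‖s‖ * Real.log (1 / ‖s‖)) ≤
        C * (1 / (‖s'‖ * Real.log (1 / ‖s'‖)) + 1) :=
  stmt14_general c Cb hc
end
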